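/- Let n be an integer and let h_k(n) be the polynomials defined by the recursion h_0(n) = 1 and h_{k+1}(n)(u) = (n − k)·u·h_k(n)(u) + (u² + 1)·d/du[h_k(n)(u)]. Then for every natural number k and every complex number x with cosh x ≠ 0, the k-th derivative of the function z ↦ (cosh z)^n (integer power), evaluated at x, equals (cosh x)^(n−k) · h_k(n)(sinh x). -/
import Mathlib


open Polynomial

/-- The polynomials `h_k(n)` with `h_0(n) = 1` and
`h_{k+1}(n)(u) = (n - k)·u·h_k(n)(u) + (u² + 1)·d/du[h_k(n)(u)]`. -/
noncomputable def hPoly (n : ℤ) : ℕ → Polynomial ℂ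
  | 0 => 1
  | k + 1 =>
      Polynomial.C ((n : ℂ) - (k : ℂ)) * Polynomial.X * hPoly n k +
        (Polynomial.X ^ 2 + 1) * Polynomial.derivative (hPoly n k)

lemma hasDerivAt_aux (m : ℤ) (p : Polynomial ℂ) (x : ℂ) (hx : Complex.cosh x ≠ 0) :
    HasDerivAt (fun z : ℂ => Complex.cosh z ^ m * p.eval (Complex.sinh z))
      ((m : ℂ) * Complex.cosh x ^ (m - 1) * Complex.sinh x * p.eval (Complex.sinh x) +
        Complex.cosh x ^ m * (p.derivative.eval (Complex.sinh x) * Complex.cosh x)) x := by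
  have h1 : HasDerivAt (fun z : ℂ => Complex.cosh z ^ m)
      ((m : ℂ) * Complex.cosh x ^ (m - 1) * Complex.sinh x) x :=
    (hasDerivAt_zpow m _ (Or.inl hx)).comp x (Complex.hasDerivAt_cosh x)
  have h2 : HasDerivAt (fun z : ℂ => p.eval (Complex.sinh z))
      (p.derivative.eval (Complex.sinh x) * Complex.cosh x) x :=
    (p.hasDerivAt (Complex.sinh x)).comp x (Complex.hasDerivAt_sinh x)
  exact h1.mul h2

theorem iteratedDeriv_cosh_zpow_eq_hPoly (n : ℤ) (k : ℕ) (x : ℂ)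
    (hx : Complex.cosh x ≠ 0) :
    iteratedDeriv k (fun z : ℂ => Complex.cosh z ^ n) x =
      Complex.cosh x ^ (n - (k : ℤ)) * (hPoly n k).eval (Complex.sinh x) := by
  induction k generalizing x with
  | zero => simp [hPoly]
  | succ k ih =>
    rw [iteratedDeriv_succ]
    have hopen : IsOpen {z : ℂ | Complex.cosh z ≠ 0} :=
      isOpen_compl_singleton.preimage Complex.continuous_cosh
    have hev : iteratedDeriv k (fun z : ℂ => Complex.cosh z ^ n) =ᶠ[nhds x]
        fun z => Complex.cosh z ^ (n - (k : ℤ)) * (hPoly n k).eval (Complex.sinh z) := by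
      filter_upwards [hopen.mem_nhds hx] with z hz using ih z hz
    rw [hev.deriv_eq, (hasDerivAt_aux (n - (k : ℤ)) (hPoly n k) x hx).deriv]
    have hc : Complex.cosh x ^ (n - (k : ℤ)) =
        Complex.cosh x ^ (n - ((k : ℕ) + 1 : ℕ) : ℤ) * Complex.cosh x := by
      rw [← zpow_add_one₀ hx]; congr 1; push_cast; ring
    have hc2 : Complex.cosh x ^ (n - (k : ℤ) - 1) =
        Complex.cosh x ^ (n - ((k : ℕ) + 1 : ℕ) : ℤ) := by
      congr 1; push_cast; ring
    have hsq : Complex.cosh x ^ 2 = Complex.sinh x ^ 2 + 1 := Complex.cosh_sq x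
    rw [hc, hc2]
    show _ = _ * (hPoly n (k + 1)).eval (Complex.sinh x)
    simp only [hPoly, Polynomial.eval_add, Polynomial.eval_mul, Polynomial.eval_C,
      Polynomial.eval_X, Polynomial.eval_pow, Polynomial.eval_one]
    rw [← hsq]
    push_cast
    ring
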